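/- (Terminating inversion lemma.) Let q ∈ ℂ* with |q| ≠ 1, let p ∈ ℤ, n, r, s ∈ ℕ₀, z ∈ ℂ*, and let a_1, …, a_r, b_1, …, b_s ∈ ℂ* with no a_i or b_j in Ω_q^n := {q^{−k} : 0 ≤ k ≤ n−1}. Then ∑_{k=0}^{n} [ (q^{−n},a_1,…,a_r;q)_k / ( (q;q)_k (b_1,…,b_s;q)_k ) ] ((−1)^k q^{k(k−1)/2})^{s−r+p} z^k = [ (a_1,…,a_r;q)_n / (b_1,…,b_s;q)_n ] (z/q)^n ((−1)^n q^{n(n−1)/2})^{s−r+p−1} ∑_{k=0}^{n} [ (q^{−n}, q^{1−n}/b_1, …, q^{1−n}/b_s;q)_k / ( (q;q)_k (q^{1−n}/a_1, …, q^{1−n}/a_r;q)_k ) ] ((−1)^k q^{k(k−1)/2})^{p} W^k, where W := (b_1⋯b_s / (a_1⋯a_r)) · q^{(1−p)n + p + 1} / z. -/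

import Mathlib

open Finset

/-- The finite q-Pochhammer symbol `(a;q)_n = ∏_{j=0}^{n-1} (1 - a q^j)`. -/
noncomputable def qPoch (a q : ℂ) (n : ℕ) : ℂ := ∏ j ∈ Finset.range n, (1 - a * q ^ j)

/-- The infinite q-Pochhammer symbol `(a;q)_∞ = ∏_{j=0}^{∞} (1 - a q^j)`. -/
noncomputable def qPochInf (a q : ℂ) : ℂ := ∏' j : ℕ, (1 - a * q ^ j)

/-- `Ω_q = {q^{-k} : k ∈ ℕ}`. -/
def Omega (q : ℂ) : Set ℂ := {w : ℂ | ∃ k : ℕ, w = q⁻¹ ^ k}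

lemma qPoch_succ (a q : ℂ) (m : ℕ) : qPoch a q (m+1) = qPoch a q m * (1 - a * q ^ m) :=
  Finset.prod_range_succ _ _

lemma qPoch_zero (a q : ℂ) : qPoch a q 0 = 1 := Finset.prod_range_zero _

lemma qPoch_ne_zero' {a q : ℂ} {m : ℕ} (h : ∀ j < m, 1 - a * q ^ j ≠ 0) : qPoch a q m ≠ 0 :=
  Finset.prod_ne_zero_iff.2 fun j hj => h j (Finset.mem_range.1 hj)

lemma winv (j : ℕ) : (((-1:ℂ))^j)⁻¹ = (-1)^j := by
  rw [← inv_pow, inv_neg, inv_one]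

lemma pzc (x : ℂ) (N : ℕ) (P : ℤ) : (x^N)^P = (x^P)^N := by
  rw [← zpow_natCast x N, ← zpow_mul, mul_comm, zpow_mul, zpow_natCast]

lemma pow_abs_ne_one {q : ℂ} (hq0 : q ≠ 0) (hq1 : ‖q‖ ≠ 1) {i j : ℕ} (hij : i ≠ j) :
    (q⁻¹:ℂ)^i * q^j ≠ 1 := by
  intro h
  have habs := congrArg (‖·‖) h
  rw [norm_mul, norm_pow, norm_pow, norm_inv, norm_one] at habs
  set x := ‖q‖ with hx
  have hx0 : 0 < x := norm_pos_iff.mpr hq0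
  have hxne : x ≠ 0 := ne_of_gt hx0
  have hpow : x ^ j = x ^ i := by
    rw [inv_pow] at habs
    field_simp at habs
    omega
  have hlog := congrArg Real.log hpow
  rw [Real.log_pow, Real.log_pow] at hlog
  have hlx : Real.log x ≠ 0 := by
    intro h0
    rcases Real.log_eq_zero.mp h0 with h1 | h1 | h1
    · exact hxne h1
    · exact hq1 h1
    · linarith
  have hji : (j:ℝ) = (i:ℝ) := mul_right_cancel₀ hlx hlog
  exact hij (by exact_mod_cast hji.symm)

lemma one_sub_ne {a q : ℂ} {j : ℕ} (h : a ≠ q⁻¹ ^ j) : 1 - a * q ^ j ≠ 0 := by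
  intro h0
  apply h
  rw [inv_pow]
  exact eq_inv_of_mul_eq_one_left (sub_eq_zero.mp h0).symm

lemma gauss (m : ℕ) : m * (m-1) / 2 = ∑ i ∈ range m, i := by
  have h := Finset.sum_range_id_mul_two m
  omega

lemma sum_tri : ∀ {k n : ℕ}, k ≤ n →
    (∑ i ∈ range (n-k), i) + k*n = (∑ i ∈ range n, i) + (∑ i ∈ range k, i) + k := by
  intro k
  induction k with
  | zero => intro n _; simp
  | succ k ih =>
    intro n hk
    have ihk := ih (Nat.le_of_succ_le hk)
    have h1 : n - k = (n - (k+1)) + 1 := by omega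
    have h2 : ∑ i ∈ range (n-k), i = (∑ i ∈ range (n-(k+1)), i) + (n - (k+1)) := by
      rw [h1, Finset.sum_range_succ]
    have h3 : ∑ i ∈ range (k+1), i = (∑ i ∈ range k, i) + k := Finset.sum_range_succ _ _
    have h4 : (k+1)*n = k*n + n := by ring
    omega

lemma sum_top : ∀ {k n : ℕ}, k ≤ n →
    (∑ i ∈ range k, (n-1-i)) + (∑ i ∈ range (n-k), i) = ∑ i ∈ range n, i := by
  intro k
  induction k with
  | zero => intro n _; simp
  | succ k ih =>
    intro n hk
    have ihk := ih (Nat.le_of_succ_le hk)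
    have h1 : n - k = (n - (k+1)) + 1 := by omega
    have h2 : ∑ i ∈ range (n-k), i = (∑ i ∈ range (n-(k+1)), i) + (n - (k+1)) := by
      rw [h1, Finset.sum_range_succ]
    have h3 : ∑ i ∈ range (k+1), (n-1-i) = (∑ i ∈ range k, (n-1-i)) + (n-1-k) :=
      Finset.sum_range_succ _ _
    omega

lemma tri {k n : ℕ} (hk : k ≤ n) :
    (n-k)*((n-k)-1)/2 + k*n = n*(n-1)/2 + k*(k-1)/2 + k := by
  have h := sum_tri hk
  rw [gauss, gauss, gauss]
  omega

lemma key_exp {k n : ℕ} (hk : k ≤ n) :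
    (∑ i ∈ range k, (n-1-i)) + k*(k-1)/2 + k = k*n := by
  have h1 := sum_top hk
  have h2 := sum_tri hk
  rw [gauss]
  omega

lemma qPoch_split (a q : ℂ) : ∀ {k n : ℕ}, k ≤ n →
    qPoch a q n = qPoch a q (n - k) * ∏ i ∈ range k, (1 - a * q ^ (n - 1 - i)) := by
  intro k
  induction k with
  | zero => intro n _; simp
  | succ k ih =>
    intro n hk
    have h1 : qPoch a q (n - k) = qPoch a q (n - (k+1)) * (1 - a * q ^ (n-1-k)) := by
      have e1 : n - k = (n - (k+1)) + 1 := by omega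
      have e2 : n - (k+1) = n - 1 - k := by omega
      rw [e1, qPoch_succ, e2]
    rw [Finset.prod_range_succ, ih (Nat.le_of_succ_le hk), h1]
    ring

lemma factor_eq {a q : ℂ} (ha : a ≠ 0) (hq0 : q ≠ 0) {n i : ℕ} (hi : i < n) :
    1 - a * q ^ (n - 1 - i) = (-a) * q ^ (n - 1 - i) * (1 - q ^ ((1:ℤ) - n) / a * q ^ i) := by
  have h1 : q ^ ((1:ℤ) - n) * q ^ (i:ℕ) * q ^ ((n - 1 - i : ℕ)) = 1 := by
    rw [← zpow_natCast q i, ← zpow_natCast q (n-1-i), ← zpow_add₀ hq0, ← zpow_add₀ hq0,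
      ← zpow_zero q]
    congr 1
    omega
  have ha' : a * a⁻¹ = 1 := mul_inv_cancel₀ ha
  linear_combination (-1 : ℂ) * h1 - (q ^ ((1:ℤ) - n) * q ^ i * q ^ (n - 1 - i)) * ha'

lemma qPoch_key {q a : ℂ} (hq0 : q ≠ 0) (ha : a ≠ 0) {k n : ℕ} (hk : k ≤ n) :
    qPoch a q n * q ^ (k*(k-1)/2) * q ^ k =
      qPoch a q (n - k) * (-a) ^ k * q ^ (k*n) * qPoch (q ^ ((1:ℤ) - n) / a) q k := by
  rw [qPoch_split a q hk]
  have hprod : ∏ i ∈ range k, (1 - a * q ^ (n-1-i)) =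
      ∏ i ∈ range k, ((-a) * q^(n-1-i) * (1 - q^((1:ℤ)-n)/a * q^i)) :=
    Finset.prod_congr rfl fun i hi =>
      factor_eq ha hq0 (lt_of_lt_of_le (Finset.mem_range.1 hi) hk)
  rw [hprod, Finset.prod_mul_distrib, Finset.prod_mul_distrib, Finset.prod_const,
    Finset.card_range, Finset.prod_pow_eq_pow_sum]
  have hqP : ∏ i ∈ range k, (1 - q^((1:ℤ)-n)/a * q^i) = qPoch (q^((1:ℤ)-n)/a) q k := rfl
  rw [hqP]
  rw [show q^(k*n) = q^((∑ i ∈ range k, (n-1-i)) + k*(k-1)/2 + k) from by rw [key_exp hk],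
    pow_add, pow_add]
  ring

lemma flipdiv (A B : ℂ) (k : ℕ) : A / ((-1:ℂ)^k * B) = A * (-1)^k / B := by
  rw [div_eq_mul_inv, mul_inv, winv, ← mul_assoc, ← div_eq_mul_inv]

lemma zpow_split_srp (n' k' : ℕ) (G : ℂ) (hG : G ≠ 0) (s' r' : ℕ) (p' : ℤ) :
    (((-1:ℂ))^n' * (-1)^k' * G) ^ ((s':ℤ) - r' + p') =
      (-1)^(n'*s') * (-1)^(k'*s') * G^s' *
        ((-1)^(n'*r') * (-1)^(k'*r') * (G^r')⁻¹) *
        ((((-1:ℂ))^p')^n' * (((-1:ℂ))^p')^k' * G^p') := by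
  have hS : ((-1:ℂ))^n' * (-1)^k' * G ≠ 0 :=
    mul_ne_zero (mul_ne_zero (pow_ne_zero _ (by norm_num)) (pow_ne_zero _ (by norm_num))) hG
  rw [zpow_add₀ hS, zpow_sub₀ hS, zpow_natCast, zpow_natCast, div_eq_mul_inv]
  rw [mul_pow (((-1:ℂ))^n' * (-1)^k') G s', mul_pow (((-1:ℂ))^n' * (-1)^k') G r',
    mul_zpow (((-1:ℂ))^n' * (-1)^k') G p']
  rw [mul_pow (((-1:ℂ))^n') ((-1)^k') s', mul_pow (((-1:ℂ))^n') ((-1)^k') r',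
    mul_zpow (((-1:ℂ))^n') ((-1)^k') p']
  rw [← pow_mul (-1:ℂ) n' s', ← pow_mul (-1:ℂ) k' s', ← pow_mul (-1:ℂ) n' r',
    ← pow_mul (-1:ℂ) k' r']
  rw [mul_inv, mul_inv, winv (n'*r'), winv (k'*r')]
  rw [pzc (-1) n' p', pzc (-1) k' p']

lemma zpow_split_srp1 (n' : ℕ) (G : ℂ) (hG : G ≠ 0) (s' r' : ℕ) (p' : ℤ) :
    (((-1:ℂ))^n' * G) ^ ((s':ℤ) - r' + p' - 1) =
      (-1)^(n'*s') * G^s' * ((-1)^(n'*r') * (G^r')⁻¹) *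
        ((((-1:ℂ))^p')^n' * G^p') * ((-1)^n' * G⁻¹) := by
  have hS : ((-1:ℂ))^n' * G ≠ 0 := mul_ne_zero (pow_ne_zero _ (by norm_num)) hG
  rw [show (s':ℤ) - r' + p' - 1 = ((s':ℤ) - r' + p') + (-1) from by ring]
  rw [zpow_add₀ hS, zpow_add₀ hS, zpow_sub₀ hS, zpow_natCast, zpow_natCast,
    zpow_neg_one, div_eq_mul_inv]
  rw [mul_pow (((-1:ℂ))^n') G s', mul_pow (((-1:ℂ))^n') G r', mul_zpow (((-1:ℂ))^n') G p']
  rw [← pow_mul (-1:ℂ) n' s', ← pow_mul (-1:ℂ) n' r']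
  rw [mul_inv (((-1:ℂ))^(n'*r')) (G^r'), winv (n'*r'), mul_inv (((-1:ℂ))^n') G, winv n']
  rw [pzc (-1) n' p']

set_option maxHeartbeats 2000000 in
/-- Terminating inversion lemma (Lemma 1.3 of the paper). -/
theorem terminating_inversion_lemma
    (q : ℂ) (hq0 : q ≠ 0) (hq1 : ‖q‖ ≠ 1)
    (p : ℤ) (n r s : ℕ) (z : ℂ) (hz : z ≠ 0)
    (a : Fin r → ℂ) (b : Fin s → ℂ)
    (ha0 : ∀ i, a i ≠ 0) (hb0 : ∀ j, b j ≠ 0)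
    (ha : ∀ i, ∀ k < n, a i ≠ q⁻¹ ^ k) (hb : ∀ j, ∀ k < n, b j ≠ q⁻¹ ^ k) :
    ∑ k ∈ Finset.range (n + 1),
        (qPoch (q⁻¹ ^ n) q k * ∏ i, qPoch (a i) q k) /
            (qPoch q q k * ∏ j, qPoch (b j) q k) *
          ((-1) ^ k * q ^ (k * (k - 1) / 2)) ^ ((s : ℤ) - r + p) * z ^ k =
      (∏ i, qPoch (a i) q n) / (∏ j, qPoch (b j) q n) * (z / q) ^ n *
        ((-1) ^ n * q ^ (n * (n - 1) / 2)) ^ ((s : ℤ) - r + p - 1) *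
        ∑ k ∈ Finset.range (n + 1),
          (qPoch (q⁻¹ ^ n) q k * ∏ j, qPoch (q ^ ((1 : ℤ) - n) / b j) q k) /
              (qPoch q q k * ∏ i, qPoch (q ^ ((1 : ℤ) - n) / a i) q k) *
            ((-1) ^ k * q ^ (k * (k - 1) / 2)) ^ p *
            ((∏ j, b j) / (∏ i, a i) * q ^ ((1 - p) * (n : ℤ) + p + 1) / z) ^ k := by
  have hqiv : (q⁻¹:ℂ) ≠ 0 := inv_ne_zero hq0
  have hqi : (q⁻¹:ℂ)^n ≠ 0 := pow_ne_zero _ hqiv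
  have harg1 : q^((1:ℤ)-n) / (q⁻¹^n) = q := by
    rw [inv_pow, ← zpow_natCast q n, ← zpow_neg, ← zpow_sub₀ hq0,
      show (1:ℤ) - n - (-(n:ℤ)) = 1 from by ring, zpow_one]
  have harg2 : q^((1:ℤ)-n) / q = q⁻¹^n := by
    rw [show (q:ℂ)^((1:ℤ)-n) / q = q^((1:ℤ)-n) / q^(1:ℤ) from by rw [zpow_one],
      ← zpow_sub₀ hq0, show (1:ℤ)-n-1 = -(n:ℤ) from by ring, zpow_neg, zpow_natCast, inv_pow]
  have hQ : ∀ m : ℕ, qPoch q q m ≠ 0 := fun m => qPoch_ne_zero' (fun j hj h0 => by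
    apply pow_abs_ne_one hq0 hq1 (show (0:ℕ) ≠ j+1 from by omega)
    rw [pow_zero, one_mul]
    linear_combination -h0)
  have hP : ∀ m, m ≤ n → qPoch (q⁻¹^n) q m ≠ 0 := fun m hm => qPoch_ne_zero' (fun j hj h0 => by
    apply pow_abs_ne_one hq0 hq1 (show n ≠ j from by omega)
    linear_combination -h0)
  have hAne : ∀ i : Fin r, ∀ m, m ≤ n → qPoch (a i) q m ≠ 0 := fun i m hm =>
    qPoch_ne_zero' fun j hj => one_sub_ne (ha i j (by omega))
  have hBne : ∀ j : Fin s, ∀ m, m ≤ n → qPoch (b j) q m ≠ 0 := fun j m hm =>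
    qPoch_ne_zero' fun j' hj' => one_sub_ne (hb j j' (by omega))
  have harga : ∀ (c : ℂ), c ≠ 0 → (∀ k' < n, c ≠ q⁻¹ ^ k') → ∀ m, m ≤ n →
      qPoch (q^((1:ℤ)-n)/c) q m ≠ 0 := by
    intro c hc hcn m hm
    apply qPoch_ne_zero'
    intro j hj h0
    apply hcn (n-1-j) (by omega)
    have h2 : c = q^((1:ℤ)-n) * q^(j:ℕ) := by
      have h4 := (sub_eq_zero.mp h0).symm
      rw [div_mul_eq_mul_div, div_eq_one_iff_eq hc] at h4
      exact h4.symm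
    rw [h2, inv_pow, ← zpow_natCast q (n-1-j), ← zpow_neg, ← zpow_natCast q j, ← zpow_add₀ hq0]
    congr 1
    omega
  have hprodA : (∏ i, a i) ≠ 0 := Finset.prod_ne_zero_iff.2 fun i _ => ha0 i
  have hprodB : (∏ j, b j) ≠ 0 := Finset.prod_ne_zero_iff.2 fun j _ => hb0 j
  rw [← Finset.sum_range_reflect]
  simp only [Nat.add_sub_cancel]
  rw [Finset.mul_sum]
  refine Finset.sum_congr rfl fun k hk' => ?_
  have hk : k ≤ n := by have := Finset.mem_range.1 hk'; omega
  -- key identities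
  have ekP := qPoch_key hq0 hqi hk
  rw [harg1] at ekP
  have ekQ := qPoch_key hq0 hq0 hk
  rw [harg2] at ekQ
  have ekPn := qPoch_key hq0 hqi (le_refl n)
  rw [harg1, Nat.sub_self, qPoch_zero, one_mul] at ekPn
  have ekA := fun i : Fin r => qPoch_key hq0 (ha0 i) (hk)
  have ekB := fun j : Fin s => qPoch_key hq0 (hb0 j) (hk)
  rw [neg_pow] at ekP
  rw [neg_pow] at ekQ
  rw [neg_pow] at ekPn
  have ekA' := fun i : Fin r => by
    have h := ekA i; rw [neg_pow] at h; exact h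
  have ekB' := fun j : Fin s => by
    have h := ekB j; rw [neg_pow] at h; exact h
  have h1k : ((-1:ℂ))^k ≠ 0 := pow_ne_zero _ (by norm_num)
  have h1n : ((-1:ℂ))^n ≠ 0 := pow_ne_zero _ (by norm_num)
  have hqkk : (q:ℂ)^k ≠ 0 := pow_ne_zero _ hq0
  have hqkn : (q:ℂ)^(k*n) ≠ 0 := pow_ne_zero _ hq0
  have hqik : ((q⁻¹:ℂ)^n)^k ≠ 0 := pow_ne_zero _ hqi
  have hqm : (q:ℂ)^(k*(k-1)/2) ≠ 0 := pow_ne_zero _ hq0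
  have hqM : (q:ℂ)^(n*(n-1)/2) ≠ 0 := pow_ne_zero _ hq0
  have hqn : (q:ℂ)^n ≠ 0 := pow_ne_zero _ hq0
  -- division forms
  have dP : qPoch (q⁻¹^n) q (n-k) =
      qPoch (q⁻¹^n) q n * q^(k*(k-1)/2) * q^k /
        ((-1)^k * ((q⁻¹^n)^k * (q^(k*n) * qPoch q q k))) := by
    rw [eq_div_iff (mul_ne_zero h1k (mul_ne_zero hqik (mul_ne_zero hqkn (hQ k))))]
    linear_combination -ekP
  have dQ : qPoch q q (n-k) =
      qPoch q q n * q^(k*(k-1)/2) * q^k /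
        ((-1)^k * (q^k * (q^(k*n) * qPoch (q⁻¹^n) q k))) := by
    rw [eq_div_iff (mul_ne_zero h1k (mul_ne_zero hqkk (mul_ne_zero hqkn (hP k hk))))]
    linear_combination -ekQ
  have dPn : qPoch (q⁻¹^n) q n =
      (-1)^n * (q⁻¹^n)^n * q^(n*n) * qPoch q q n / (q^(n*(n-1)/2) * q^n) := by
    rw [eq_div_iff (mul_ne_zero hqM hqn)]
    linear_combination ekPn
  have dA : ∀ i : Fin r, qPoch (a i) q (n-k) =
      qPoch (a i) q n * q^(k*(k-1)/2) * q^k /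
        ((-1)^k * ((a i)^k * (q^(k*n) * qPoch (q^((1:ℤ)-n)/(a i)) q k))) := by
    intro i
    rw [eq_div_iff (mul_ne_zero h1k (mul_ne_zero (pow_ne_zero _ (ha0 i))
      (mul_ne_zero hqkn (harga (a i) (ha0 i) (ha i) k hk))))]
    linear_combination -(ekA' i)
  have dB : ∀ j : Fin s, qPoch (b j) q (n-k) =
      qPoch (b j) q n * q^(k*(k-1)/2) * q^k * (-1)^k /
        ((b j)^k * (q^(k*n) * qPoch (q^((1:ℤ)-n)/(b j)) q k)) := by
    intro j
    rw [← flipdiv]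
    rw [eq_div_iff (mul_ne_zero h1k (mul_ne_zero (pow_ne_zero _ (hb0 j))
      (mul_ne_zero hqkn (harga (b j) (hb0 j) (hb j) k hk))))]
    linear_combination -(ekB' j)
  have dAprod : (∏ i, qPoch (a i) q (n-k)) =
      (∏ i, qPoch (a i) q n) * (q^(k*(k-1)/2))^r * (q^k)^r /
        (((-1:ℂ))^(k*r) * ((∏ i, a i)^k *
          ((q^(k*n))^r * ∏ i, qPoch (q^((1:ℤ)-n)/(a i)) q k))) := by
    rw [Finset.prod_congr rfl (fun i _ => dA i), Finset.prod_div_distrib]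
    simp only [Finset.prod_mul_distrib, Finset.prod_const, Finset.card_univ, Fintype.card_fin,
      Finset.prod_pow]
    ring
  have dBprod : (∏ j, qPoch (b j) q (n-k)) =
      (∏ j, qPoch (b j) q n) * (q^(k*(k-1)/2))^s * (q^k)^s * ((-1:ℂ))^(k*s) /
        ((∏ j, b j)^k * ((q^(k*n))^s * ∏ j, qPoch (q^((1:ℤ)-n)/(b j)) q k)) := by
    rw [Finset.prod_congr rfl (fun j _ => dB j), Finset.prod_div_distrib]
    simp only [Finset.prod_mul_distrib, Finset.prod_const, Finset.card_univ, Fintype.card_fin,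
      Finset.prod_pow]
    ring
  have hsign : ((-1):ℂ)^(n-k) = (-1)^n * (-1)^k := by
    have h2 : ((-1):ℂ)^k * (-1)^k = 1 := by
      rw [← pow_add, ← two_mul, pow_mul]
      norm_num
    have h1 : ((-1):ℂ)^(n-k) * (-1)^k = (-1)^n := by
      rw [← pow_add]
      congr 1
      omega
    calc ((-1):ℂ)^(n-k) = (-1)^(n-k) * ((-1)^k * (-1)^k) := by rw [h2, mul_one]
      _ = ((-1)^(n-k) * (-1)^k) * (-1)^k := by ring
      _ = (-1)^n * (-1)^k := by rw [h1]
  have hMid : (q:ℂ)^((n-k) * ((n-k)-1) / 2) =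
      q^(n*(n-1)/2) * q^(k*(k-1)/2) * q^k / q^(k*n) := by
    rw [eq_div_iff hqkn, ← pow_add, ← pow_add, ← pow_add]
    congr 1
    exact tri hk
  have hz' : z^(n-k) = z^n * (z^k)⁻¹ := pow_sub₀ z hz hk
  have hG : (q:ℂ)^(n*(n-1)/2) * q^(k*(k-1)/2) * q^k / q^(k*n) ≠ 0 :=
    div_ne_zero (mul_ne_zero (mul_ne_zero hqM hqm) hqkk) hqkn
  have hCkp : (((-1):ℂ)^k * q^(k*(k-1)/2))^p = ((-1)^p)^k * (q^p)^(k*(k-1)/2) := by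
    rw [mul_zpow, pzc, pzc]
  have hW : (q:ℂ)^((1-p)*(n:ℤ)+p+1) = q^(n+1) * q^p * ((q^p)^n)⁻¹ := by
    have h1 : (q:ℂ)^((1-p)*(n:ℤ)+p+1) = q^(((n+1:ℕ)):ℤ) * q^p * (q^(p*(n:ℤ)))⁻¹ := by
      rw [← zpow_neg, ← zpow_add₀ hq0, ← zpow_add₀ hq0]
      congr 1
      push_cast
      ring
    rw [h1, zpow_natCast, zpow_mul, zpow_natCast]
  have hqp : (q:ℂ)^p ≠ 0 := zpow_ne_zero _ hq0
  have hep : ((-1:ℂ))^p ≠ 0 := zpow_ne_zero _ (by norm_num)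
  have hAprodn : (∏ i, qPoch (a i) q n) ≠ 0 :=
    Finset.prod_ne_zero_iff.2 fun i _ => hAne i n le_rfl
  have hBprodn : (∏ j, qPoch (b j) q n) ≠ 0 :=
    Finset.prod_ne_zero_iff.2 fun j _ => hBne j n le_rfl
  have hA'prod : (∏ i, qPoch (q^((1:ℤ)-n)/(a i)) q k) ≠ 0 :=
    Finset.prod_ne_zero_iff.2 fun i _ => harga (a i) (ha0 i) (ha i) k hk
  have hB'prod : (∏ j, qPoch (q^((1:ℤ)-n)/(b j)) q k) ≠ 0 :=
    Finset.prod_ne_zero_iff.2 fun j _ => harga (b j) (hb0 j) (hb j) k hk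
  rw [dP, dAprod, dQ, dBprod, hsign, hMid, hz', dPn]
  rw [zpow_split_srp n k _ hG s r p]
  rw [zpow_split_srp1 n (q^(n*(n-1)/2)) hqM s r p]
  have hGp : ((q:ℂ)^(n*(n-1)/2) * q^(k*(k-1)/2) * q^k / q^(k*n))^p
      = (q^p)^(n*(n-1)/2) * (q^p)^(k*(k-1)/2) * (q^p)^k * ((q^p)^(k*n))⁻¹ := by
    rw [div_zpow, mul_zpow, mul_zpow, pzc q (n*(n-1)/2) p, pzc q (k*(k-1)/2) p, pzc q k p,
      pzc q (k*n) p, div_eq_mul_inv]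
  have hG'p : ((q:ℂ)^(n*(n-1)/2))^p = (q^p)^(n*(n-1)/2) := pzc q (n*(n-1)/2) p
  rw [hGp, hG'p, hCkp, hW]
  set PA := ∏ i, qPoch (q ^ ((1:ℤ) - n) / a i) q k with hPAdef
  set PB := ∏ j, qPoch (q ^ ((1:ℤ) - n) / b j) q k with hPBdef
  simp only [inv_pow]
  have hPk2 : qPoch ((q^n)⁻¹) q k ≠ 0 := by rw [← inv_pow]; exact hP k hk
  have hPk3 : qPoch (1/(q^n)) q k ≠ 0 := by rw [one_div, ← inv_pow]; exact hP k hk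
  have hQk : qPoch q q k ≠ 0 := hQ k
  have hQn : qPoch q q n ≠ 0 := hQ n
  generalize hw : (-1 : ℂ) = w
  have hw0 : w ≠ 0 := by rw [← hw]; norm_num
  have hwp : w^p ≠ 0 := zpow_ne_zero _ hw0
  field_simp [hq0, hz, hQ k, hQ n, hPk2, hprodA, hprodB, hA'prod, hB'prod,
    hAprodn, hBprodn, hqp, hw0, hwp]
  field_simp
  ring_nf
  simp only [inv_pow]
  field_simp
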